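/- arXiv:2405.13765 — 3 statements merged into one kernel-verified Lean document; each statement's English description precedes it below -/
import Mathlib

section
/- Consider the high-order tuner iteration on ℝ^N: xₜ = βₜ zₜ + (1 - βₜ) yₜ, yₜ₊₁ = xₜ - (μₜ/Nₜ)∇fₜ(xₜ), zₜ₊₁ = zₜ - (γₜ/Nₜ)∇fₜ(xₜ), where each fₜ is convex and Lₜ-smooth with common minimizer x*, Nₜ ≥ Lₜ > 0, βₜ ∈ [0,1), μₜ ∈ (0,1], and γₜ = μₜ/2. Then the Lyapunov candidate Vₜ = ‖zₜ - x*‖² + ‖yₜ - zₜ‖² satisfies Vₜ₊₁ - Vₜ ≤ 2(γₜ/Nₜ)(fₜ(x*) - fₜ(xₜ)) ≤ 0. -/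
open scoped RealInnerProductSpace

/-! With `g = ∇fₜ(xₜ)` and `a = γₜ / Nₜ`, the updates read `zₜ₊₁ - x* = (zₜ - x*) - a • g` and
`yₜ₊₁ - zₜ₊₁ = (1 - βₜ) • (yₜ - zₜ) - a • g`, so expanding the squares gives
`Vₜ₊₁ - Vₜ = -2a⟪g, xₜ - x*⟫ + 2a²‖g‖² - (1 - (1 - βₜ)²)‖yₜ - zₜ‖²`.
For a convex `L`-smooth function with `∇f(x*) = 0` one has
`⟪g, x - x*⟫ ≥ f(x) - f(x*) + ‖g‖² / (2L)` (convexity at `x` and the descent lemma at `x*`,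
both evaluated at `x* + g / L`), and since `2aLₜ ≤ μₜ ≤ 1` this absorbs the `2a²‖g‖²` term. -/

section

variable {E : Type*} [NormedAddCommGroup E] [InnerProductSpace ℝ E] [CompleteSpace E]
  {f : E → ℝ}

theorem IsLocalMin.hasGradientAt_eq_zero {g a : E} (h : IsLocalMin f a)
    (hg : HasGradientAt f g a) : g = 0 :=
  (InnerProductSpace.toDual ℝ E).map_eq_zero_iff.mp (h.hasFDerivAt_eq_zero hg.hasFDerivAt)

theorem HasGradientAt.hasDerivAt_comp_lineMap {g p d : E} {s : ℝ}
    (hg : HasGradientAt f g (s • d + p)) :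
    HasDerivAt (fun s : ℝ => f (s • d + p)) ⟪g, d⟫ s := by
  have hline : HasDerivAt (fun s : ℝ => s • d + p) d s := by
    simpa using ((hasDerivAt_id s).smul_const d).add_const p
  exact hg.hasFDerivAt.comp_hasDerivAt s hline

theorem ConvexOn.add_inner_le_of_hasGradientAt {g p : E} (hf : ConvexOn ℝ Set.univ f)
    (hg : HasGradientAt f g p) (w : E) : f p + ⟪g, w - p⟫ ≤ f w := by
  have hline : ConvexOn ℝ Set.univ (fun s : ℝ => f (s • (w - p) + p)) :=
    hf.comp_affineMap (AffineMap.lineMap p w)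
  have hderiv : HasDerivAt (fun s : ℝ => f (s • (w - p) + p)) ⟪g, w - p⟫ 0 :=
    HasGradientAt.hasDerivAt_comp_lineMap (by simpa using hg)
  have := hline.le_slope_of_hasDerivAt (Set.mem_univ 0) (Set.mem_univ 1) one_pos hderiv
  simp only [slope_def_field, one_smul, zero_smul, zero_add, sub_add_cancel, sub_zero,
    div_one] at this
  linarith

theorem le_add_inner_add_sq_of_lipschitz_gradient {g : E → E} {L : ℝ}
    (hg : ∀ p, HasGradientAt f (g p) p) (hlip : ∀ p q, ‖g p - g q‖ ≤ L * ‖p - q‖) (v w : E) :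
    f w ≤ f v + ⟪g v, w - v⟫ + L / 2 * ‖w - v‖ ^ 2 := by
  set d := w - v
  let h : ℝ → ℝ := fun s => f (s • d + v) - s * ⟪g v, d⟫ - L / 2 * ‖d‖ ^ 2 * s ^ 2
  have hderiv (s : ℝ) :
      HasDerivAt h (⟪g (s • d + v), d⟫ - ⟪g v, d⟫ - L / 2 * ‖d‖ ^ 2 * (2 * s)) s := by
    refine ((HasGradientAt.hasDerivAt_comp_lineMap (hg _)).sub ?_).sub ?_
    · simpa using (hasDerivAt_id s).mul_const ⟪g v, d⟫
    · simpa using (hasDerivAt_pow 2 s).const_mul (L / 2 * ‖d‖ ^ 2)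
  have hanti : AntitoneOn h (Set.Ici 0) := by
    refine antitoneOn_of_hasDerivWithinAt_nonpos (convex_Ici 0)
      (fun s _ => (hderiv s).continuousAt.continuousWithinAt)
      (fun s _ => (hderiv s).hasDerivWithinAt) fun s hs => ?_
    rw [interior_Ici, Set.mem_Ioi] at hs
    have hgs : ‖g (s • d + v) - g v‖ ≤ L * (s * ‖d‖) := by
      simpa [norm_smul, abs_of_pos hs] using hlip (s • d + v) v
    calc ⟪g (s • d + v), d⟫ - ⟪g v, d⟫ - L / 2 * ‖d‖ ^ 2 * (2 * s)
        = ⟪g (s • d + v) - g v, d⟫ - L * (s * ‖d‖) * ‖d‖ := by rw [inner_sub_left]; ring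
      _ ≤ ‖g (s • d + v) - g v‖ * ‖d‖ - L * (s * ‖d‖) * ‖d‖ := by
        gcongr; exact real_inner_le_norm _ _
      _ ≤ 0 := by nlinarith [norm_nonneg d]
  have h10 : h 1 ≤ h 0 := hanti Set.self_mem_Ici (Set.mem_Ici.2 zero_le_one) zero_le_one
  simp only [h, d, one_smul, zero_smul, zero_add, sub_add_cancel, one_mul, one_pow, mul_one,
    zero_mul, sub_zero, ne_eq, OfNat.ofNat_ne_zero, not_false_eq_true, zero_pow, mul_zero] at h10
  linarith

theorem ConvexOn.add_inner_add_sq_norm_sub_le {g : E → E} {L : ℝ} (hf : ConvexOn ℝ Set.univ f)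
    (hg : ∀ p, HasGradientAt f (g p) p) (hlip : ∀ p q, ‖g p - g q‖ ≤ L * ‖p - q‖) (hL : 0 < L)
    (x y : E) : f x + ⟪g x, y - x⟫ + 1 / (2 * L) * ‖g x - g y‖ ^ 2 ≤ f y := by
  set e := g x - g y
  have hconv := hf.add_inner_le_of_hasGradientAt (hg x) (y + L⁻¹ • e)
  have hdesc := le_add_inner_add_sq_of_lipschitz_gradient hg hlip y (y + L⁻¹ • e)
  rw [show y + L⁻¹ • e - x = (y - x) + L⁻¹ • e by abel, inner_add_right,
    real_inner_smul_right] at hconv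
  rw [add_sub_cancel_left, real_inner_smul_right, norm_smul, Real.norm_of_nonneg (by positivity),
    mul_pow] at hdesc
  have hsplit : ⟪g x, e⟫ = ⟪g y, e⟫ + ‖e‖ ^ 2 := by
    rw [← real_inner_self_eq_norm_sq, ← inner_add_left, add_sub_cancel]
  have hcoef : L⁻¹ - L / 2 * L⁻¹ ^ 2 = 1 / (2 * L) := by field_simp; ring
  linear_combination hconv + hdesc - L⁻¹ * hsplit - ‖e‖ ^ 2 * hcoef

theorem highOrderTuner_lyapunov_step_le {f' : E → E} {L a β : ℝ} {x y z xstar : E}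
    (hgrad : ∀ w, HasGradientAt f (f' w) w) (hconv : ConvexOn ℝ Set.univ f)
    (hsmooth : ∀ w v, ‖f' w - f' v‖ ≤ L * ‖w - v‖) (hstar : f' xstar = 0) (hL : 0 < L)
    (ha : 0 ≤ a) (haL : 2 * a * L ≤ 1) (hβ₀ : 0 ≤ β) (hβ₁ : β ≤ 1)
    (hx : x = β • z + (1 - β) • y) :
    ‖z - a • f' x - xstar‖ ^ 2 + ‖x - (2 * a) • f' x - (z - a • f' x)‖ ^ 2
        - (‖z - xstar‖ ^ 2 + ‖y - z‖ ^ 2) ≤ 2 * a * (f xstar - f x) := by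
  have hkey := hconv.add_inner_add_sq_norm_sub_le hgrad hsmooth hL x xstar
  rw [hstar, sub_zero] at hkey
  set g := f' x
  set u := z - xstar
  set w := y - z
  have hz' : z - a • g - xstar = u - a • g := sub_right_comm _ _ _
  have hy' : x - (2 * a) • g - (z - a • g) = (1 - β) • w - a • g := by rw [hx]; module
  have hxstar : xstar - x = -(u + (1 - β) • w) := by rw [hx]; module
  rw [hz', hy']
  rw [hxstar, inner_neg_right, inner_add_right, real_inner_smul_right] at hkey
  simp only [norm_sub_sq_real, norm_smul, Real.norm_eq_abs, mul_pow, sq_abs,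
    real_inner_smul_left, real_inner_smul_right, real_inner_comm u g, real_inner_comm w g] at hkey ⊢
  have hβw : ((1 - β) ^ 2 - 1) * ‖w‖ ^ 2 ≤ 0 :=
    mul_nonpos_of_nonpos_of_nonneg (by nlinarith) (sq_nonneg _)
  have hag : a * (2 * a - 1 / L) * ‖g‖ ^ 2 ≤ 0 := by
    have h2a : 2 * a - 1 / L ≤ 0 := by rw [sub_nonpos, le_div_iff₀ hL]; exact haL
    exact mul_nonpos_of_nonpos_of_nonneg (mul_nonpos_of_nonneg_of_nonpos ha h2a) (sq_nonneg _)
  linear_combination (2 * a) * hkey + hβw + hag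

end

theorem stmt_6 (N : ℕ)
    (f : ℕ → EuclideanSpace ℝ (Fin N) → ℝ)
    (f' : ℕ → EuclideanSpace ℝ (Fin N) → EuclideanSpace ℝ (Fin N))
    (x y z : ℕ → EuclideanSpace ℝ (Fin N))
    (xstar : EuclideanSpace ℝ (Fin N))
    (L Nt β μ γ : ℕ → ℝ)
    (hgrad : ∀ t w, HasGradientAt (f t) (f' t w) w)
    (hconv : ∀ t, ConvexOn ℝ Set.univ (f t))
    (hsmooth : ∀ t w v, ‖f' t w - f' t v‖ ≤ L t * ‖w - v‖)
    (hmin : ∀ t w, f t xstar ≤ f t w)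
    (hL : ∀ t, 0 < L t) (hN : ∀ t, L t ≤ Nt t)
    (hβ : ∀ t, β t ∈ Set.Ico (0 : ℝ) 1)
    (hμ : ∀ t, μ t ∈ Set.Ioc (0 : ℝ) 1)
    (hγ : ∀ t, γ t = μ t / 2)
    (hx : ∀ t, x t = β t • z t + (1 - β t) • y t)
    (hy : ∀ t, y (t + 1) = x t - (μ t / Nt t) • f' t (x t))
    (hz : ∀ t, z (t + 1) = z t - (γ t / Nt t) • f' t (x t)) :
    ∀ t, (‖z (t + 1) - xstar‖ ^ 2 + ‖y (t + 1) - z (t + 1)‖ ^ 2)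
          - (‖z t - xstar‖ ^ 2 + ‖y t - z t‖ ^ 2)
        ≤ 2 * (γ t / Nt t) * (f t xstar - f t (x t)) ∧
      2 * (γ t / Nt t) * (f t xstar - f t (x t)) ≤ 0 := by
  intro t
  obtain ⟨hμ₀, hμ₁⟩ := hμ t
  have hNt : 0 < Nt t := (hL t).trans_le (hN t)
  have ha : 0 ≤ γ t / Nt t := div_nonneg (by rw [hγ]; linarith) hNt.le
  have hμN : μ t / Nt t = 2 * (γ t / Nt t) := by rw [hγ]; ring
  have haL : 2 * (γ t / Nt t) * L t ≤ 1 := by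
    rw [← hμN, div_mul_eq_mul_div, div_le_one hNt]
    nlinarith [hL t, hN t]
  have hstar : f' t xstar = 0 :=
    IsLocalMin.hasGradientAt_eq_zero (Filter.Eventually.of_forall (hmin t)) (hgrad t xstar)
  refine ⟨?_, mul_nonpos_of_nonneg_of_nonpos (by positivity) (sub_nonpos.2 (hmin t (x t)))⟩
  rw [hy, hz, hμN]
  exact highOrderTuner_lyapunov_step_le (hgrad t) (hconv t) (hsmooth t) hstar (hL t) ha haL
    (hβ t).1 (hβ t).2.le (hx t)
end

section
/- Consider the high-order tuner with γₜ = μₜ/2, μₜ ∈ (0,1], βₜ ∈ [0,1), applied to fₜ convex, Lₜ-smooth, and σₜ-strongly convex with minimizer x*, Nₜ ≥ Lₜ. Let β̄ₜ = 1 - βₜ, ρₜ = (μₜ/2)(σₜ/Nₜ), and pick νₜ ∈ (0,1). Then Vₜ = ‖zₜ - x*‖² + ‖yₜ - zₜ‖² satisfies Vₜ₊₁ ≤ (1 - ωₜ)Vₜ where ωₜ = min{ (1-νₜ)(1-β̄ₜ²), ρₜνₜ(1-β̄ₜ²) / (ρₜβ̄ₜ² + νₜ(1-β̄ₜ²)) }.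 -/
/-!
With `d = z - x*`, `c = y - z` and `b = 1 - β`, one step gives `z' - x* = d - r g` and
`y' - z' = b c - r g` with `g = ∇f(x)`, `r = μ / (2N)` and `x - x* = d + b c`, so
`V' = ‖d‖² + b²‖c‖² - 2r⟪g, x - x*⟫ + 2r²‖g‖²`. Strong convexity together with the
smoothness bound `‖g‖² ≤ 2L (f x - f x*)` and `2rL ≤ 1` turns this into
`V' ≤ ‖d‖² + b²‖c‖² - ρ‖d + b c‖²` with `ρ = rσ`. Completing the square in `c` shows
`ρ‖d + b c‖² + ν(1 - b²)‖c‖² ≥ ρν(1 - b²) / (ρb² + ν(1 - b²)) ‖d‖²`, and comparing the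
coefficients of `‖d‖²` and `‖c‖²` with those of `V` gives the contraction factor.
-/

open scoped RealInnerProductSpace

section InnerProductSpace

variable {E : Type*} [NormedAddCommGroup E] [InnerProductSpace ℝ E]

theorem norm_sub_smul_sq_add_norm_smul_sub_smul_sq (d c g : E) (b r : ℝ) :
    ‖d - r • g‖ ^ 2 + ‖b • c - r • g‖ ^ 2 =
      ‖d‖ ^ 2 + b ^ 2 * ‖c‖ ^ 2 - 2 * r * ⟪g, d + b • c⟫ + 2 * r ^ 2 * ‖g‖ ^ 2 := by
  simp only [norm_sub_sq_real, inner_add_right, real_inner_smul_right, norm_smul,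
    mul_pow, Real.norm_eq_abs, sq_abs, real_inner_comm g]
  ring

/-- `ρκ / (ρb² + κ) ‖d‖²` is the minimum of the right-hand side over `c`, attained where
`ρ b d + (ρ b² + κ) c = 0`. -/
theorem div_mul_norm_sq_le_mul_norm_add_smul_sq_add (d c : E) {ρ κ b : ℝ}
    (hD : 0 < ρ * b ^ 2 + κ) :
    ρ * κ / (ρ * b ^ 2 + κ) * ‖d‖ ^ 2 ≤ ρ * ‖d + b • c‖ ^ 2 + κ * ‖c‖ ^ 2 := by
  have hsq : (ρ * ‖d + b • c‖ ^ 2 + κ * ‖c‖ ^ 2) * (ρ * b ^ 2 + κ) - ρ * κ * ‖d‖ ^ 2 =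
      ‖(ρ * b) • d + (ρ * b ^ 2 + κ) • c‖ ^ 2 := by
    simp only [norm_add_sq_real, real_inner_smul_left, real_inner_smul_right, norm_smul, mul_pow,
      Real.norm_eq_abs, sq_abs]
    ring
  rw [div_mul_eq_mul_div, div_le_iff₀ hD]
  linarith [sq_nonneg ‖(ρ * b) • d + (ρ * b ^ 2 + κ) • c‖]

end InnerProductSpace

section LipschitzGradient

variable {F : Type*} [NormedAddCommGroup F] [InnerProductSpace ℝ F] [CompleteSpace F]
  {f : F → ℝ} {f' : F → F} {L : ℝ}

theorem HasGradientAt.hasDerivAt_comp_add_smul {g w u : F} {s : ℝ}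
    (h : HasGradientAt f g (w + s • u)) :
    HasDerivAt (fun s : ℝ => f (w + s • u)) ⟪g, u⟫ s := by
  have hline : HasDerivAt (fun s : ℝ => w + s • u) u s := by
    simpa using ((hasDerivAt_id s).smul_const u).const_add w
  have h' := h.hasFDerivAt.comp_hasDerivAt s hline
  rwa [InnerProductSpace.toDual_apply_apply] at h'

theorem image_le_of_lipschitz_gradient (hgrad : ∀ w, HasGradientAt f (f' w) w)
    (hsmooth : ∀ w v, ‖f' w - f' v‖ ≤ L * ‖w - v‖) (w v : F) :
    f v ≤ f w + ⟪f' w, v - w⟫ + L / 2 * ‖v - w‖ ^ 2 := by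
  set u := v - w
  let ψ : ℝ → ℝ := fun s => f (w + s • u) - s * ⟪f' w, u⟫ - s ^ 2 * (L / 2 * ‖u‖ ^ 2)
  have hψ : ∀ s : ℝ,
      HasDerivAt ψ (⟪f' (w + s • u) - f' w, u⟫ - s * (L * ‖u‖ ^ 2)) s := fun s => by
    have h := (((hgrad (w + s • u)).hasDerivAt_comp_add_smul (w := w) (u := u)).sub
      ((hasDerivAt_id s).mul_const ⟪f' w, u⟫)).sub
      ((hasDerivAt_pow 2 s).mul_const (L / 2 * ‖u‖ ^ 2))
    exact h.congr_deriv (by rw [inner_sub_left]; simp only [one_mul]; ring)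
  have hψ_nonpos : ∀ s ∈ interior (Set.Icc (0 : ℝ) 1),
      ⟪f' (w + s • u) - f' w, u⟫ - s * (L * ‖u‖ ^ 2) ≤ 0 := by
    intro s hs
    rw [interior_Icc] at hs
    have hlip : ‖f' (w + s • u) - f' w‖ ≤ L * (s * ‖u‖) := by
      simpa [norm_smul, abs_of_pos hs.1] using hsmooth (w + s • u) w
    nlinarith [real_inner_le_norm (f' (w + s • u) - f' w) u,
      mul_le_mul_of_nonneg_right hlip (norm_nonneg u)]
  have hanti : AntitoneOn ψ (Set.Icc 0 1) :=
    antitoneOn_of_hasDerivWithinAt_nonpos (convex_Icc 0 1)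
      (HasDerivAt.continuousOn fun s _ => hψ s) (fun s _ => (hψ s).hasDerivWithinAt) hψ_nonpos
  have h01 := hanti (Set.left_mem_Icc.2 zero_le_one) (Set.right_mem_Icc.2 zero_le_one) zero_le_one
  simp only [ψ, u, one_smul, add_sub_cancel, zero_smul, add_zero] at h01
  linarith

theorem norm_sq_gradient_le_of_lipschitz_gradient (hgrad : ∀ w, HasGradientAt f (f' w) w)
    (hsmooth : ∀ w v, ‖f' w - f' v‖ ≤ L * ‖w - v‖) (hL : 0 < L) {xstar : F}
    (hmin : ∀ v, f xstar ≤ f v) (w : F) :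
    ‖f' w‖ ^ 2 ≤ 2 * L * (f w - f xstar) := by
  have hdescent := image_le_of_lipschitz_gradient hgrad hsmooth w (w - L⁻¹ • f' w)
  rw [sub_sub_cancel_left, norm_neg, inner_neg_right, real_inner_smul_right,
    real_inner_self_eq_norm_sq, norm_smul, Real.norm_eq_abs, abs_inv, abs_of_pos hL] at hdescent
  have hstep : L / 2 * (L⁻¹ * ‖f' w‖) ^ 2 - L⁻¹ * ‖f' w‖ ^ 2 = -(‖f' w‖ ^ 2 / (2 * L)) := by
    field_simp
    ring
  have h : ‖f' w‖ ^ 2 / (2 * L) ≤ f w - f xstar := by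
    linarith [hmin (w - L⁻¹ • f' w)]
  rwa [div_le_iff₀ (by positivity), mul_comm] at h

theorem two_mul_sq_mul_norm_sq_gradient_add_le (hgrad : ∀ w, HasGradientAt f (f' w) w)
    (hsmooth : ∀ w v, ‖f' w - f' v‖ ≤ L * ‖w - v‖) (hL : 0 < L) {xstar : F}
    (hmin : ∀ v, f xstar ≤ f v) {σ : ℝ}
    (hstrong : ∀ w, f xstar ≥ f w + ⟪f' w, xstar - w⟫ + σ / 2 * ‖xstar - w‖ ^ 2)
    {r : ℝ} (hr : 0 ≤ r) (hrL : 2 * r * L ≤ 1) (w : F) :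
    2 * r ^ 2 * ‖f' w‖ ^ 2 + r * σ * ‖w - xstar‖ ^ 2 ≤ 2 * r * ⟪f' w, w - xstar⟫ := by
  have hgap : 0 ≤ f w - f xstar := sub_nonneg.2 (hmin w)
  have hgrad_sq : 2 * r ^ 2 * ‖f' w‖ ^ 2 ≤ 2 * r * (f w - f xstar) := by
    calc 2 * r ^ 2 * ‖f' w‖ ^ 2
        ≤ 2 * r ^ 2 * (2 * L * (f w - f xstar)) := by
          gcongr; exact norm_sq_gradient_le_of_lipschitz_gradient hgrad hsmooth hL hmin w
      _ = 2 * r * (2 * r * L) * (f w - f xstar) := by ring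
      _ ≤ 2 * r * 1 * (f w - f xstar) := by gcongr
      _ = 2 * r * (f w - f xstar) := by ring
  have hconvex : f w - f xstar + σ / 2 * ‖w - xstar‖ ^ 2 ≤ ⟪f' w, w - xstar⟫ := by
    have h := hstrong w
    rw [← neg_sub w xstar, inner_neg_right, norm_neg] at h
    linarith
  nlinarith [mul_le_mul_of_nonneg_left hconvex (by positivity : (0 : ℝ) ≤ 2 * r)]

theorem highOrderTuner_lyapunov_step_le_s11 (hgrad : ∀ w, HasGradientAt f (f' w) w)
    (hsmooth : ∀ w v, ‖f' w - f' v‖ ≤ L * ‖w - v‖) (hL : 0 < L) {xstar : F}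
    (hmin : ∀ v, f xstar ≤ f v) {σ : ℝ} (hσ : 0 < σ)
    (hstrong : ∀ w, f xstar ≥ f w + ⟪f' w, xstar - w⟫ + σ / 2 * ‖xstar - w‖ ^ 2)
    {r b ν : ℝ} (hr : 0 < r) (hrL : 2 * r * L ≤ 1) (hb0 : 0 < b) (hb1 : b ≤ 1) (hν : 0 ≤ ν)
    {x d c : F} (hx : x - xstar = d + b • c) :
    ‖d - r • f' x‖ ^ 2 + ‖b • c - r • f' x‖ ^ 2 ≤
      (1 - min ((1 - ν) * (1 - b ^ 2))
          (r * σ * ν * (1 - b ^ 2) / (r * σ * b ^ 2 + ν * (1 - b ^ 2)))) *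
        (‖d‖ ^ 2 + ‖c‖ ^ 2) := by
  have hb2 : 0 ≤ 1 - b ^ 2 := by nlinarith
  have hD : 0 < r * σ * b ^ 2 + ν * (1 - b ^ 2) := by positivity
  set A := (1 - ν) * (1 - b ^ 2)
  set B := r * σ * ν * (1 - b ^ 2) / (r * σ * b ^ 2 + ν * (1 - b ^ 2))
  have hcoer := two_mul_sq_mul_norm_sq_gradient_add_le hgrad hsmooth hL hmin hstrong hr.le hrL x
  have hmin_sq := div_mul_norm_sq_le_mul_norm_add_smul_sq_add d c hD
  rw [← hx, ← mul_assoc (r * σ) ν] at hmin_sq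
  calc ‖d - r • f' x‖ ^ 2 + ‖b • c - r • f' x‖ ^ 2
      = ‖d‖ ^ 2 + b ^ 2 * ‖c‖ ^ 2 - 2 * r * ⟪f' x, x - xstar⟫ + 2 * r ^ 2 * ‖f' x‖ ^ 2 := by
        rw [hx, norm_sub_smul_sq_add_norm_smul_sub_smul_sq]
    _ ≤ ‖d‖ ^ 2 + b ^ 2 * ‖c‖ ^ 2 - r * σ * ‖x - xstar‖ ^ 2 := by linarith
    _ ≤ (1 - B) * ‖d‖ ^ 2 + (1 - A) * ‖c‖ ^ 2 := by linarith
    _ ≤ (1 - min A B) * (‖d‖ ^ 2 + ‖c‖ ^ 2) := by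
        nlinarith [min_le_left A B, min_le_right A B, sq_nonneg ‖d‖, sq_nonneg ‖c‖]

end LipschitzGradient

theorem stmt_11_general (N : ℕ)
    (f : ℕ → EuclideanSpace ℝ (Fin N) → ℝ)
    (f' : ℕ → EuclideanSpace ℝ (Fin N) → EuclideanSpace ℝ (Fin N))
    (x y z : ℕ → EuclideanSpace ℝ (Fin N))
    (xstar : EuclideanSpace ℝ (Fin N))
    (L Nt β μ γ σ ν : ℕ → ℝ)
    (hgrad : ∀ t w, HasGradientAt (f t) (f' t w) w)
    (hsmooth : ∀ t w v, ‖f' t w - f' t v‖ ≤ L t * ‖w - v‖)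
    (hstrong : ∀ t w v, f t v ≥ f t w + ⟪f' t w, v - w⟫ + (σ t / 2) * ‖v - w‖ ^ 2)
    (hσ : ∀ t, 0 < σ t)
    (hmin : ∀ t w, f t xstar ≤ f t w)
    (hL : ∀ t, 0 < L t) (hN : ∀ t, L t ≤ Nt t)
    (hβ : ∀ t, β t ∈ Set.Ico (0 : ℝ) 1)
    (hμ : ∀ t, μ t ∈ Set.Ioc (0 : ℝ) 1)
    (hγ : ∀ t, γ t = μ t / 2)
    (hν : ∀ t, ν t ∈ Set.Ioo (0 : ℝ) 1)
    (hx : ∀ t, x t = β t • z t + (1 - β t) • y t)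
    (hy : ∀ t, y (t + 1) = x t - (μ t / Nt t) • f' t (x t))
    (hz : ∀ t, z (t + 1) = z t - (γ t / Nt t) • f' t (x t)) :
    ∀ t,
      ‖z (t + 1) - xstar‖ ^ 2 + ‖y (t + 1) - z (t + 1)‖ ^ 2 ≤
        (1 - min ((1 - ν t) * (1 - (1 - β t) ^ 2))
            (((μ t / 2) * (σ t / Nt t)) * ν t * (1 - (1 - β t) ^ 2) /
              (((μ t / 2) * (σ t / Nt t)) * (1 - β t) ^ 2 + ν t * (1 - (1 - β t) ^ 2)))) *
          (‖z t - xstar‖ ^ 2 + ‖y t - z t‖ ^ 2) := by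
  intro t
  obtain ⟨hβ0, hβ1⟩ := hβ t
  obtain ⟨hμ0, hμ1⟩ := hμ t
  have hN0 : 0 < Nt t := (hL t).trans_le (hN t)
  set r := μ t / 2 / Nt t
  have hrL : 2 * r * L t ≤ 1 := by
    have : L t / Nt t ≤ 1 := (div_le_one hN0).2 (hN t)
    calc 2 * r * L t = μ t * (L t / Nt t) := by ring
      _ ≤ 1 := by nlinarith
  have hz' : z (t + 1) - xstar = (z t - xstar) - r • f' t (x t) := by
    rw [hz t, hγ t]; abel
  have hy' : y (t + 1) - z (t + 1) = (1 - β t) • (y t - z t) - r • f' t (x t) := by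
    rw [hy t, hz t, hγ t, hx t]; module
  have hx' : x t - xstar = (z t - xstar) + (1 - β t) • (y t - z t) := by
    rw [hx t]; module
  rw [hz', hy', show μ t / 2 * (σ t / Nt t) = r * σ t by ring]
  exact highOrderTuner_lyapunov_step_le_s11 (hgrad t) (hsmooth t) (hL t) (hmin t) (hσ t)
    (fun w => hstrong t w xstar) (by positivity) hrL (by linarith) (by linarith) (hν t).1.le hx'

theorem stmt_11 (N : ℕ)
    (f : ℕ → EuclideanSpace ℝ (Fin N) → ℝ)
    (f' : ℕ → EuclideanSpace ℝ (Fin N) → EuclideanSpace ℝ (Fin N))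
    (x y z : ℕ → EuclideanSpace ℝ (Fin N))
    (xstar : EuclideanSpace ℝ (Fin N))
    (L Nt β μ γ σ ν : ℕ → ℝ)
    (hgrad : ∀ t w, HasGradientAt (f t) (f' t w) w)
    (hconv : ∀ t, ConvexOn ℝ Set.univ (f t))
    (hsmooth : ∀ t w v, ‖f' t w - f' t v‖ ≤ L t * ‖w - v‖)
    (hstrong : ∀ t w v, f t v ≥ f t w + ⟪f' t w, v - w⟫ + (σ t / 2) * ‖v - w‖ ^ 2)
    (hσ : ∀ t, 0 < σ t)
    (hmin : ∀ t w, f t xstar ≤ f t w)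
    (hL : ∀ t, 0 < L t) (hN : ∀ t, L t ≤ Nt t)
    (hβ : ∀ t, β t ∈ Set.Ico (0 : ℝ) 1)
    (hμ : ∀ t, μ t ∈ Set.Ioc (0 : ℝ) 1)
    (hγ : ∀ t, γ t = μ t / 2)
    (hν : ∀ t, ν t ∈ Set.Ioo (0 : ℝ) 1)
    (hx : ∀ t, x t = β t • z t + (1 - β t) • y t)
    (hy : ∀ t, y (t + 1) = x t - (μ t / Nt t) • f' t (x t))
    (hz : ∀ t, z (t + 1) = z t - (γ t / Nt t) • f' t (x t)) :
    ∀ t,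
      ‖z (t + 1) - xstar‖ ^ 2 + ‖y (t + 1) - z (t + 1)‖ ^ 2 ≤
        (1 - min ((1 - ν t) * (1 - (1 - β t) ^ 2))
            (((μ t / 2) * (σ t / Nt t)) * ν t * (1 - (1 - β t) ^ 2) /
              (((μ t / 2) * (σ t / Nt t)) * (1 - β t) ^ 2 + ν t * (1 - (1 - β t) ^ 2)))) *
          (‖z t - xstar‖ ^ 2 + ‖y t - z t‖ ^ 2) :=
  stmt_11_general N f f' x y z xstar L Nt β μ γ σ ν hgrad hsmooth hstrong hσ hmin hL hN hβ hμ hγ hν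
    hx hy hz
end

section
/- Consider the streaming regression problem fₜ(x) = (1 - Dₜᵀx)² on ℝ² with Dₜ = (1,0) for t < τ and Dₜ = (0,1) for t ≥ τ. Then x* = (1,1) is the unique point satisfying fₜ(x*) = 0 = min fₜ for all t, and for any iterative method whose updates satisfy x_{t+1} - x_t ∈ span{∇fₜ(xₜ)} with initial condition x₀ = (0, x₂⁰), the second coordinate of xₜ remains x₂⁰ for all t ≤ τ, so f_τ(x_τ) = (1 - x₂⁰)², independent of τ. -/
/-!
Before time `τ` every gradient is a multiple of the first basis vector, so an update in its
span never moves the second coordinate; at time `τ` the loss depends on that coordinate alone.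
-/

open scoped RealInnerProductSpace

namespace EuclideanSpace

variable {ι : Type*}

theorem apply_eq_of_sub_mem_span_singleton {u v d : EuclideanSpace ℝ ι} {i : ι}
    (hd : d i = 0) (h : u - v ∈ Submodule.span ℝ {d}) : u i = v i := by
  obtain ⟨a, ha⟩ := Submodule.mem_span_singleton.mp h
  have hdiff : u i - v i = a * d i := by
    rw [← PiLp.sub_apply, ← ha, PiLp.smul_apply, smul_eq_mul]
  rw [hd, mul_zero, sub_eq_zero] at hdiff
  exact hdiff

theorem apply_eq_apply_zero_of_sub_mem_span {x g : ℕ → EuclideanSpace ℝ ι} {i : ι} {τ : ℕ}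
    (hupd : ∀ t < τ, x (t + 1) - x t ∈ Submodule.span ℝ {g t}) (hg : ∀ t < τ, g t i = 0) :
    ∀ t ≤ τ, x t i = x 0 i := by
  intro t ht
  induction t with
  | zero => rfl
  | succ n ih =>
    have hn : n < τ := ht
    rw [apply_eq_of_sub_mem_span_singleton (hg n hn) (hupd n hn), ih hn.le]

end EuclideanSpace

theorem stmt_17_general (τ : ℕ) (hτ : 0 < τ)
    (D : ℕ → EuclideanSpace ℝ (Fin 2))
    (hD : ∀ t, D t = if t < τ then EuclideanSpace.single 0 1 else EuclideanSpace.single 1 1)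
    (f : ℕ → EuclideanSpace ℝ (Fin 2) → ℝ)
    (hf : ∀ t w, f t w = (1 - ⟪D t, w⟫) ^ 2)
    (xstar : EuclideanSpace ℝ (Fin 2)) (hxstar : ∀ i, xstar i = 1)
    (x : ℕ → EuclideanSpace ℝ (Fin 2))
    (hupd : ∀ t, x (t + 1) - x t ∈ Submodule.span ℝ {(2 * (⟪D t, x t⟫ - 1)) • D t}) :
    (∀ t, f t xstar = 0 ∧ ∀ w, f t xstar ≤ f t w) ∧
      (∀ w : EuclideanSpace ℝ (Fin 2), (∀ t, f t w = 0) → w = xstar) ∧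
      (∀ t ≤ τ, x t 1 = x 0 1) ∧
      f τ (x τ) = (1 - x 0 1) ^ 2 := by
  have hf' : ∀ t w, f t w = (1 - if t < τ then w 0 else w 1) ^ 2 := by
    intro t w
    rw [hf, hD]
    split_ifs <;> simp [EuclideanSpace.inner_single_left]
  have hcoord : ∀ t ≤ τ, x t 1 = x 0 1 :=
    EuclideanSpace.apply_eq_apply_zero_of_sub_mem_span (fun t _ => hupd t)
      (fun t ht => by simp [hD, ht])
  have hxstar_zero : ∀ t, f t xstar = 0 := fun t => by simp [hf', hxstar]
  refine ⟨fun t => ⟨hxstar_zero t, fun w => ?_⟩, fun w hw => ?_, hcoord, ?_⟩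
  · rw [hxstar_zero, hf']
    positivity
  · have h0 : w 0 = 1 := by
      have := hw 0
      rwa [hf', if_pos hτ, sq_eq_zero_iff, sub_eq_zero, eq_comm] at this
    have h1 : w 1 = 1 := by
      have := hw τ
      rwa [hf', if_neg (lt_irrefl τ), sq_eq_zero_iff, sub_eq_zero, eq_comm] at this
    ext i
    fin_cases i <;> simp [h0, h1, hxstar]
  · rw [hf', if_neg (lt_irrefl τ), hcoord τ le_rfl]

theorem stmt_17 (τ : ℕ) (hτ : 0 < τ)
    (D : ℕ → EuclideanSpace ℝ (Fin 2))
    (hD : ∀ t, D t = if t < τ then EuclideanSpace.single 0 1 else EuclideanSpace.single 1 1)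
    (f : ℕ → EuclideanSpace ℝ (Fin 2) → ℝ)
    (hf : ∀ t w, f t w = (1 - ⟪D t, w⟫) ^ 2)
    (xstar : EuclideanSpace ℝ (Fin 2)) (hxstar : ∀ i, xstar i = 1)
    (x : ℕ → EuclideanSpace ℝ (Fin 2))
    (hupd : ∀ t, x (t + 1) - x t ∈ Submodule.span ℝ {(2 * (⟪D t, x t⟫ - 1)) • D t})
    (hx0 : x 0 0 = 0) :
    (∀ t, f t xstar = 0 ∧ ∀ w, f t xstar ≤ f t w) ∧
      (∀ w : EuclideanSpace ℝ (Fin 2), (∀ t, f t w = 0) → w = xstar) ∧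
      (∀ t ≤ τ, x t 1 = x 0 1) ∧
      f τ (x τ) = (1 - x 0 1) ^ 2 :=
  stmt_17_general τ hτ D hD f hf xstar hxstar x hupd
end
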